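/- arXiv:0706.4193 — 5 statements merged into one kernel-verified Lean document; each statement's English description precedes it below -/
import Mathlib

section
/- Let c ≥ 0 and let ψ : ℝ → ℝ be twice differentiable on [0,∞) with ψ(0) = 0, ψ'(0) = 0, and ψ''(t) + ψ'(t) ≤ c for all t ≥ 0. Then ψ(t) ≤ c·(e^{−t} + t − 1) for all t ≥ 0. -/
open Real Set

/- The comparison function `θ t = c (e^{-t} + t - 1)` solves `θ'' + θ' = c` with `θ(0) = θ'(0) = 0`.
Multiplying by the integrating factor `e^t` turns `u' + u ≤ v' + v` into a comparison of
derivatives, so first `ψ' ≤ θ'`, and then, integrating once more, `ψ ≤ θ`. -/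

theorem le_of_hasDerivWithinAt_Ici_le {f g f' g' : ℝ → ℝ} {a : ℝ}
    (hf : ∀ t ∈ Ici a, HasDerivWithinAt f (f' t) (Ici a) t)
    (hg : ∀ t ∈ Ici a, HasDerivWithinAt g (g' t) (Ici a) t)
    (ha : f a ≤ g a) (hderiv : ∀ t ∈ Ioi a, f' t ≤ g' t) :
    ∀ t ∈ Ici a, f t ≤ g t := by
  have hdiff : ∀ t ∈ Ici a, HasDerivWithinAt (g - f) (g' t - f' t) (Ici a) t :=
    fun t ht => (hg t ht).sub (hf t ht)
  have hmono : MonotoneOn (g - f) (Ici a) := by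
    refine monotoneOn_of_hasDerivWithinAt_nonneg (f' := g' - f') (convex_Ici a)
      (fun t ht => (hdiff t ht).continuousWithinAt) ?_ ?_ <;> rw [interior_Ici]
    · exact fun t ht => (hdiff t (mem_Ici_of_Ioi ht)).mono Ioi_subset_Ici_self
    · exact fun t ht => sub_nonneg.mpr (hderiv t ht)
  intro t ht
  have := hmono self_mem_Ici ht ht
  simp only [Pi.sub_apply] at this
  linarith

theorem le_of_hasDerivWithinAt_Ici_add_self_le {u v u' v' : ℝ → ℝ} {a : ℝ}
    (hu : ∀ t ∈ Ici a, HasDerivWithinAt u (u' t) (Ici a) t)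
    (hv : ∀ t ∈ Ici a, HasDerivWithinAt v (v' t) (Ici a) t)
    (ha : u a ≤ v a) (hderiv : ∀ t ∈ Ioi a, u' t + u t ≤ v' t + v t) :
    ∀ t ∈ Ici a, u t ≤ v t := by
  have hexp_mul : ∀ {w w' : ℝ → ℝ}, (∀ t ∈ Ici a, HasDerivWithinAt w (w' t) (Ici a) t) →
      ∀ t ∈ Ici a, HasDerivWithinAt (fun s => exp s * w s) (exp t * (w' t + w t)) (Ici a) t :=
    fun hw t ht => ((hasDerivAt_exp t).hasDerivWithinAt.mul (hw t ht)).congr_deriv (by ring)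
  have hcomp := le_of_hasDerivWithinAt_Ici_le (hexp_mul hu) (hexp_mul hv)
    (mul_le_mul_of_nonneg_left ha (exp_pos a).le)
    (fun t ht => mul_le_mul_of_nonneg_left (hderiv t ht) (exp_pos t).le)
  exact fun t ht => le_of_mul_le_mul_left (hcomp t ht) (exp_pos t)

theorem gronwall_comparison_general (c : ℝ) (ψ ψ' ψ'' : ℝ → ℝ)
    (hψ : ∀ t ∈ Ici (0 : ℝ), HasDerivWithinAt ψ (ψ' t) (Ici 0) t)
    (hψ' : ∀ t ∈ Ici (0 : ℝ), HasDerivWithinAt ψ' (ψ'' t) (Ici 0) t)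
    (h0 : ψ 0 = 0) (h0' : ψ' 0 = 0)
    (hineq : ∀ t ∈ Ici (0 : ℝ), ψ'' t + ψ' t ≤ c) :
    ∀ t ∈ Ici (0 : ℝ), ψ t ≤ c * (Real.exp (-t) + t - 1) := by
  have hexp_neg : ∀ t : ℝ, HasDerivAt (fun s => exp (-s)) (-exp (-t)) t := fun t => by
    simpa using (hasDerivAt_neg t).exp
  have hθ : ∀ t : ℝ, HasDerivAt (fun s => c * (exp (-s) + s - 1)) (c * (1 - exp (-t))) t :=
    fun t => ((((hexp_neg t).add (hasDerivAt_id t)).sub_const 1).const_mul c).congr_deriv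
      (by ring)
  have hθ' : ∀ t : ℝ, HasDerivAt (fun s => c * (1 - exp (-s))) (c * exp (-t)) t :=
    fun t => (((hexp_neg t).const_sub 1).const_mul c).congr_deriv (by ring)
  have hψ'_le : ∀ t ∈ Ici (0 : ℝ), ψ' t ≤ c * (1 - exp (-t)) :=
    le_of_hasDerivWithinAt_Ici_add_self_le hψ' (fun t _ => (hθ' t).hasDerivWithinAt)
      (by simp [h0']) (fun t ht => by linarith [hineq t (mem_Ici_of_Ioi ht)])
  exact le_of_hasDerivWithinAt_Ici_le hψ (fun t _ => (hθ t).hasDerivWithinAt)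
    (by simp [h0]) (fun t ht => hψ'_le t (mem_Ici_of_Ioi ht))

/-- **A Gronwall-type comparison.** If `ψ` is twice differentiable on `[0,∞)` with
`ψ(0) = ψ'(0) = 0` and `ψ'' + ψ' ≤ c` on `[0,∞)` for some `c ≥ 0`, then
`ψ(t) ≤ c·(e^{−t} + t − 1)` for all `t ≥ 0`. -/
theorem gronwall_comparison (c : ℝ) (hc : 0 ≤ c) (ψ ψ' ψ'' : ℝ → ℝ)
    (hψ : ∀ t ∈ Ici (0 : ℝ), HasDerivWithinAt ψ (ψ' t) (Ici 0) t)
    (hψ' : ∀ t ∈ Ici (0 : ℝ), HasDerivWithinAt ψ' (ψ'' t) (Ici 0) t)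
    (h0 : ψ 0 = 0) (h0' : ψ' 0 = 0)
    (hineq : ∀ t ∈ Ici (0 : ℝ), ψ'' t + ψ' t ≤ c) :
    ∀ t ∈ Ici (0 : ℝ), ψ t ≤ c * (Real.exp (-t) + t - 1) :=
  gronwall_comparison_general c ψ ψ' ψ'' hψ hψ' h0 h0' hineq
end

section
/- Let 0 < p < 1 and λ ∈ ℝ. Set Δ = 1 + 4λ(λ + 2p − 1), s₁ = (−1 + √Δ)/2, s₂ = (−1 − √Δ)/2, and let M be the real 2×2 matrix with rows (−1+p+λ, 1−p) and (p, −p−λ). Then: (i) Δ > 0, so s₁ > s₂ are two distinct real numbers, and both are eigenvalues of M; (ii) p + λ + s₂ < 0; (iii) with the row vector m = (p, 1−p), the ratio (m · exp(tM))₁ / (m · exp(tM))₂ of the two entries of m · exp(tM) converges, as t → ∞, to −p/(p + λ + s₂); (iv) this limit −p/(p + λ + s₂) equals 1 if and only if λ = 1 − 2p. -/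
/-!
Since `s₁ + s₂ = tr M` and `s₁ s₂ = det M`, Cayley–Hamilton gives `(M - s₁)(M - s₂) = 0`, so
`P = (M - s₂)/(s₁ - s₂)` is an idempotent with `M = s₁ P + s₂ (1 - P)`. Hence
`exp (tM) = e^{t s₁} P + e^{t s₂} (1 - P)`, and as `t → ∞` the first term dominates: the ratio of
the entries of `m exp (tM)` tends to that of `m (M - s₂)`, which the characteristic equation
`s₂² + s₂ = λ(λ + 2p - 1)` identifies with `-p/(p + λ + s₂)`.
-/

open Matrix Filter

section ExpIdempotent

variable {𝔸 : Type*} [Ring 𝔸] [Algebra ℝ 𝔸]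

theorem IsIdempotentElem.smul_add_smul_one_sub_pow {P : 𝔸} (hP : IsIdempotentElem P)
    (a b : ℝ) (n : ℕ) : (a • P + b • (1 - P)) ^ n = a ^ n • P + b ^ n • (1 - P) := by
  induction n with
  | zero => simp
  | succ n ih =>
    simp only [pow_succ, ih, add_mul, mul_add, smul_mul_smul_comm, hP.eq, hP.one_sub.eq,
      hP.mul_one_sub_self, hP.one_sub_mul_self, smul_zero, add_zero, zero_add]

variable [TopologicalSpace 𝔸] [IsTopologicalRing 𝔸] [ContinuousSMul ℝ 𝔸] [T2Space 𝔸]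

theorem IsIdempotentElem.exp_smul_add_smul_one_sub {P : 𝔸} (hP : IsIdempotentElem P)
    (a b : ℝ) :
    NormedSpace.exp (a • P + b • (1 - P)) = Real.exp a • P + Real.exp b • (1 - P) := by
  have hseries (c : ℝ) : HasSum (fun n : ℕ => ((n.factorial : ℝ)⁻¹ * c ^ n)) (Real.exp c) := by
    simpa [Real.exp_eq_exp_ℝ, div_eq_inv_mul] using NormedSpace.expSeries_div_hasSum_exp c
  rw [NormedSpace.exp_eq_tsum ℝ]
  refine HasSum.tsum_eq ?_
  convert ((hseries a).smul_const P).add ((hseries b).smul_const (1 - P)) using 2 with n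
  rw [hP.smul_add_smul_one_sub_pow, smul_add, smul_smul, smul_smul]

theorem exp_smul_eq_of_sub_smul_one_mul_sub_smul_one_eq_zero {A : 𝔸} {a b : ℝ} (hab : a ≠ b)
    (hA : (A - a • 1) * (A - b • 1) = 0) (t : ℝ) :
    NormedSpace.exp (t • A) = Real.exp (t * a) • ((a - b)⁻¹ • (A - b • 1)) +
      Real.exp (t * b) • (1 - (a - b)⁻¹ • (A - b • 1)) := by
  have hab' : a - b ≠ 0 := sub_ne_zero.mpr hab
  have hsq : (A - b • 1) * (A - b • 1) = (a - b) • (A - b • 1) :=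
    calc (A - b • 1) * (A - b • 1) = ((A - a • 1) + (a - b) • (1 : 𝔸)) * (A - b • 1) := by
          rw [sub_smul]; abel_nf
      _ = (a - b) • (A - b • 1) := by rw [add_mul, hA, zero_add, smul_mul_assoc, one_mul]
  have hP : IsIdempotentElem ((a - b)⁻¹ • (A - b • 1)) := by
    rw [IsIdempotentElem, smul_mul_smul_comm, hsq, smul_smul, inv_mul_cancel_right₀ hab']
  have hsplit (P : 𝔸) (hAP : A = b • 1 + (a - b) • P) :
      t • A = (t * a) • P + (t * b) • (1 - P) := by
    rw [hAP]; module
  rw [← hP.exp_smul_add_smul_one_sub, hsplit]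
  rw [smul_smul, mul_inv_cancel₀ hab', one_smul, add_sub_cancel]

end ExpIdempotent

theorem tendsto_exp_mul_add_div_exp_mul_add {a b : ℝ} (hba : b < a) {x₀ y₀ x₁ y₁ : ℝ}
    (hx₁ : x₁ ≠ 0) :
    Tendsto (fun t => (Real.exp (t * a) * x₀ + Real.exp (t * b) * y₀) /
      (Real.exp (t * a) * x₁ + Real.exp (t * b) * y₁)) atTop (nhds (x₀ / x₁)) := by
  have hdecay : Tendsto (fun t => Real.exp (t * (b - a))) atTop (nhds 0) :=
    Real.tendsto_exp_atBot.comp (tendsto_id.atTop_mul_const_of_neg (sub_neg.mpr hba))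
  have hlim := (tendsto_const_nhds (x := x₀)).add (hdecay.mul_const y₀) |>.div
    ((tendsto_const_nhds (x := x₁)).add (hdecay.mul_const y₁)) (by simpa using hx₁)
  simp only [zero_mul, add_zero] at hlim
  refine hlim.congr fun t => ?_
  have hexp : Real.exp (t * b) = Real.exp (t * a) * Real.exp (t * (b - a)) := by
    rw [← Real.exp_add]; ring_nf
  rw [hexp, mul_assoc, mul_assoc, ← mul_add, ← mul_add,
    mul_div_mul_left _ _ (Real.exp_pos _).ne']
  rfl

namespace Matrix

theorem sub_smul_one_mul_sub_smul_one_fin_two {R : Type*} [CommRing R]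
    (A : Matrix (Fin 2) (Fin 2) R) (a b : R) :
    (A - a • 1) * (A - b • 1) = (A.trace - (a + b)) • A + (a * b - A.det) • 1 := by
  ext i j
  fin_cases i <;> fin_cases j <;>
    simp only [Fin.zero_eta, Fin.mk_one, Fin.isValue, mul_apply, sub_apply, smul_apply,
      add_apply, one_apply_eq, one_apply_ne, ne_eq, zero_ne_one, one_ne_zero,
      not_false_eq_true, smul_eq_mul, mul_one, mul_zero, sub_zero, add_zero,
      Fin.sum_univ_two, trace_fin_two, det_fin_two] <;>
    ring

theorem det_sub_smul_one_fin_two {R : Type*} [CommRing R] (A : Matrix (Fin 2) (Fin 2) R)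
    (s : R) : (A - s • 1).det = s ^ 2 - A.trace * s + A.det := by
  simp only [det_fin_two, trace_fin_two, Fin.isValue, sub_apply, smul_apply, one_apply_eq,
    one_apply_ne, ne_eq, zero_ne_one, one_ne_zero, not_false_eq_true, smul_eq_mul, mul_one,
    mul_zero, sub_zero]
  ring

theorem tendsto_vecMul_exp_smul_div {n : Type*} [Fintype n] [DecidableEq n]
    {A : Matrix n n ℝ} {a b : ℝ} (hba : b < a) (hA : (A - a • 1) * (A - b • 1) = 0)
    (m : n → ℝ) (i j : n) (hj : vecMul m (A - b • 1) j ≠ 0) :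
    Tendsto (fun t : ℝ => vecMul m (NormedSpace.exp (t • A)) i /
        vecMul m (NormedSpace.exp (t • A)) j)
      atTop (nhds (vecMul m (A - b • 1) i / vecMul m (A - b • 1) j)) := by
  have hab : (a - b)⁻¹ ≠ 0 := inv_ne_zero (sub_ne_zero.mpr hba.ne')
  simp only [exp_smul_eq_of_sub_smul_one_mul_sub_smul_one_eq_zero hba.ne' hA, vecMul_add,
    vecMul_smul, Pi.add_apply, Pi.smul_apply, smul_eq_mul]
  rw [← mul_div_mul_left _ _ hab]
  exact tendsto_exp_mul_add_div_exp_mul_add hba (mul_ne_zero hab hj)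

end Matrix

theorem vecMul_sub_smul_one_feynmanKac (p l s : ℝ) :
    vecMul ![p, 1 - p] (!![-1 + p + l, 1 - p; p, -p - l] - s • 1) =
      ![p * (l - s), -((1 - p) * (l + s))] := by
  ext j
  fin_cases j <;>
    simp only [vecMul, dotProduct, Fin.zero_eta, Fin.mk_one, Fin.isValue, Matrix.sub_apply,
      Matrix.smul_apply, of_apply, cons_val', cons_val_zero, cons_val_one, cons_val_fin_one,
      smul_eq_mul, Fin.sum_univ_two, one_apply_eq, one_apply_ne, ne_eq, zero_ne_one, one_ne_zero,
      not_false_eq_true, mul_one, mul_zero, sub_zero] <;>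
    ring

theorem neg_div_eq_one_iff_of_sq_add_self_eq {p l s : ℝ} (hp : 0 < p)
    (hs : s ^ 2 + s = l * (l + 2 * p - 1)) (hs_lt : s < -1 / 2) :
    -p / (p + l + s) = 1 ↔ l = 1 - 2 * p := by
  constructor
  · intro h
    have hne : p + l + s ≠ 0 := fun h0 => by simp [h0] at h
    rw [div_eq_one_iff_eq hne] at h
    have hfactor : p * (2 * p + l - 1) = 0 := by
      linear_combination (1 / 2) * hs - (1 / 2) * (2 * p + l - s - 1) * h
    linarith [(mul_eq_zero.mp hfactor).resolve_left hp.ne']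
  · rintro rfl
    have hroot : s * (s + 1) = 0 := by linear_combination hs
    have hs_eq : s = -1 := by linarith [(mul_eq_zero.mp hroot).resolve_left (by linarith)]
    rw [hs_eq, div_eq_one_iff_eq (by linarith)]
    ring

/-- **Spectral analysis of the 2×2 Feynman–Kac matrix.** Let `0 < p < 1`, `λ ∈ ℝ`,
`Δ = 1 + 4λ(λ + 2p − 1)`, `s₁ = (−1 + √Δ)/2`, `s₂ = (−1 − √Δ)/2`, and
`M = !![−1+p+λ, 1−p; p, −p−λ]`. Then `Δ > 0` (so `s₁ > s₂` are two distinct real numbers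
and both are eigenvalues of `M`), `p + λ + s₂ < 0`, the ratio of the two entries of the
row vector `(p, 1−p)·exp(tM)` converges as `t → ∞` to `−p/(p + λ + s₂)`, and this limit
equals `1` if and only if `λ = 1 − 2p`. -/
theorem feynman_kac_two_by_two (p l : ℝ) (hp : 0 < p) (hp1 : p < 1)
    (Δ s₁ s₂ : ℝ) (hΔ : Δ = 1 + 4 * l * (l + 2 * p - 1))
    (hs₁ : s₁ = (-1 + Real.sqrt Δ) / 2) (hs₂ : s₂ = (-1 - Real.sqrt Δ) / 2)
    (M : Matrix (Fin 2) (Fin 2) ℝ)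
    (hM : M = !![-1 + p + l, 1 - p; p, -p - l]) :
    0 < Δ ∧ s₂ < s₁ ∧
    (M - s₁ • (1 : Matrix (Fin 2) (Fin 2) ℝ)).det = 0 ∧
    (M - s₂ • (1 : Matrix (Fin 2) (Fin 2) ℝ)).det = 0 ∧
    p + l + s₂ < 0 ∧
    Tendsto (fun t : ℝ =>
        (Matrix.vecMul ![p, 1 - p] (NormedSpace.exp (t • M)) 0) /
        (Matrix.vecMul ![p, 1 - p] (NormedSpace.exp (t • M)) 1))
      atTop (nhds (-p / (p + l + s₂))) ∧
    (-p / (p + l + s₂) = 1 ↔ l = 1 - 2 * p) := by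
  have hdisc : (2 * p + 2 * l - 1) ^ 2 < Δ := by
    rw [hΔ]; nlinarith [mul_pos hp (sub_pos.mpr hp1)]
  have hΔpos : 0 < Δ := (sq_nonneg _).trans_lt hdisc
  have htr : M.trace = -1 := by rw [hM, trace_fin_two_of]; ring
  have hdet : M.det = -(l * (l + 2 * p - 1)) := by rw [hM, det_fin_two_of]; ring
  have hsum : s₁ + s₂ = M.trace := by rw [htr, hs₁, hs₂]; ring
  have hprod : s₁ * s₂ = M.det := by
    rw [hdet, hs₁, hs₂]; linear_combination (-1 / 4) * Real.sq_sqrt hΔpos.le - (1 / 4) * hΔ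
  have hgap : s₂ < s₁ := by rw [hs₁, hs₂]; linarith [Real.sqrt_pos.mpr hΔpos]
  have hden : p + l + s₂ < 0 := by rw [hs₂]; linarith [Real.lt_sqrt_of_sq_lt hdisc]
  have hchar : (M - s₁ • 1) * (M - s₂ • 1) = 0 := by
    rw [sub_smul_one_mul_sub_smul_one_fin_two, ← hsum, ← hprod]; simp
  have hroot₂ : s₂ ^ 2 + s₂ = l * (l + 2 * p - 1) := by
    linear_combination s₂ * hsum.trans htr - hprod.trans hdet
  have hrow : vecMul ![p, 1 - p] (M - s₂ • 1) = ![p * (l - s₂), -((1 - p) * (l + s₂))] := by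
    rw [hM, vecMul_sub_smul_one_feynmanKac]
  have hrow₁ : -((1 - p) * (l + s₂)) ≠ 0 :=
    neg_ne_zero.mpr (mul_ne_zero (sub_pos.mpr hp1).ne' (by linarith))
  refine ⟨hΔpos, hgap, by rw [det_sub_smul_one_fin_two, ← hsum, ← hprod]; ring,
    by rw [det_sub_smul_one_fin_two, ← hsum, ← hprod]; ring, hden, ?_,
    neg_div_eq_one_iff_of_sq_add_self_eq hp hroot₂ (by linarith [hsum.trans htr])⟩
  convert tendsto_vecMul_exp_smul_div hgap hchar ![p, 1 - p] 0 1 (by simpa [hrow] using hrow₁)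
    using 2
  rw [hrow, cons_val_zero, cons_val_one, cons_val_zero, div_eq_div_iff hden.ne hrow₁]
  linear_combination p * hroot₂
end

section
/- For every p ∈ (0,1) and every s ∈ [0,1] one has (s − p)² ≤ p(1−p)·(√(s/p) − √((1−s)/(1−p)))², and equality holds when s = 1 − p; in particular the constant p(1−p) cannot be replaced by any smaller constant. -/
open Real Set Filter Topology

/-! With `a = √f(1)`, `b = √f(0)` one has `p a² + (1 - p) b² = 1` and `s - p = p(1-p)(a² - b²)`,
so `W₁² = p²(1-p)²(a + b)² · I`. The Cauchy–Schwarz defect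
`p a² + (1 - p) b² - p(1-p)(a + b)² = (p a - (1 - p) b)²` bounds the factor `p²(1-p)²(a + b)²`
by `p(1-p)`, with equality exactly at `s = 1 - p`. Sharpness follows from continuity of that
factor in `s`: near `s = 1 - p` it exceeds any `c < p(1-p)`, and there `I > 0` once `s ≠ p`. -/

theorem sq_sub_eq_of_mul_sq_eq {R : Type*} [CommRing R] {p s a b : R}
    (ha : p * a ^ 2 = s) (hb : (1 - p) * b ^ 2 = 1 - s) :
    (s - p) ^ 2 = p ^ 2 * (1 - p) ^ 2 * (a + b) ^ 2 * (a - b) ^ 2 := by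
  linear_combination (s - p + p * (1 - p) * (a ^ 2 - b ^ 2)) * (p * hb - (1 - p) * ha)

theorem mul_mul_add_sq_le_of_mul_sq_add_mul_sq_eq_one {R : Type*} [CommRing R] [LinearOrder R]
    [IsStrictOrderedRing R] {p a b : R} (h : p * a ^ 2 + (1 - p) * b ^ 2 = 1) :
    p * (1 - p) * (a + b) ^ 2 ≤ 1 := by
  nlinarith [sq_nonneg (p * a - (1 - p) * b)]

theorem mul_sq_sqrt_div {x y : ℝ} (hx : 0 < x) (hy : 0 ≤ y) : x * √(y / x) ^ 2 = y := by
  rw [sq_sqrt (div_nonneg hy hx.le)]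
  field_simp

/-- `W₁(ν,μ)² / I(ν|μ)` for the Bernoulli measures `ν({1}) = s ≠ p = μ({1})`. -/
noncomputable def bernoulliW1IRatio (p s : ℝ) : ℝ :=
  p ^ 2 * (1 - p) ^ 2 * (√(s / p) + √((1 - s) / (1 - p))) ^ 2

theorem continuous_bernoulliW1IRatio (p : ℝ) : Continuous (bernoulliW1IRatio p) := by
  unfold bernoulliW1IRatio
  fun_prop

section Bernoulli

variable {p s : ℝ} (hp : 0 < p) (hp1 : p < 1)
include hp hp1

theorem sq_sub_eq_bernoulliW1IRatio_mul (hs : s ∈ Icc 0 1) :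
    (s - p) ^ 2 = bernoulliW1IRatio p s * (√(s / p) - √((1 - s) / (1 - p))) ^ 2 :=
  sq_sub_eq_of_mul_sq_eq (mul_sq_sqrt_div hp hs.1)
    (mul_sq_sqrt_div (sub_pos.2 hp1) (sub_nonneg.2 hs.2))

theorem bernoulliW1IRatio_le (hs : s ∈ Icc 0 1) : bernoulliW1IRatio p s ≤ p * (1 - p) := by
  have hsum : p * √(s / p) ^ 2 + (1 - p) * √((1 - s) / (1 - p)) ^ 2 = 1 := by
    rw [mul_sq_sqrt_div hp hs.1, mul_sq_sqrt_div (sub_pos.2 hp1) (sub_nonneg.2 hs.2)]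
    ring
  have hpq : 0 < p * (1 - p) := mul_pos hp (sub_pos.2 hp1)
  have := mul_le_mul_of_nonneg_left (mul_mul_add_sq_le_of_mul_sq_add_mul_sq_eq_one hsum) hpq.le
  unfold bernoulliW1IRatio
  linarith

theorem bernoulliW1IRatio_one_sub_self : bernoulliW1IRatio p (1 - p) = p * (1 - p) := by
  have hq : 0 < 1 - p := sub_pos.2 hp1
  have ha := mul_sq_sqrt_div hp hq.le
  have hb := mul_sq_sqrt_div hq hp.le
  have hab : √((1 - p) / p) * √(p / (1 - p)) = 1 := by
    rw [← sqrt_mul (div_nonneg hq.le hp.le), div_mul_div_cancel₀ hp.ne', div_self hq.ne',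
      sqrt_one]
  unfold bernoulliW1IRatio
  rw [sub_sub_cancel]
  linear_combination (p * (1 - p)) * ((1 - p) * ha + p * hb + 2 * p * (1 - p) * hab)

theorem sqrt_div_sub_sqrt_div_ne_zero (hs : s ∈ Icc 0 1) (hsp : s ≠ p) :
    √(s / p) - √((1 - s) / (1 - p)) ≠ 0 := by
  have hq : 0 < 1 - p := sub_pos.2 hp1
  rw [sub_ne_zero, Ne, sqrt_inj (div_nonneg hs.1 hp.le) (div_nonneg (sub_nonneg.2 hs.2) hq.le),
    div_eq_div_iff hp.ne' hq.ne']
  contrapose! hsp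
  linarith

theorem exists_ne_lt_bernoulliW1IRatio {c : ℝ} (hc : c < p * (1 - p)) :
    ∃ s ∈ Icc (0 : ℝ) 1, s ≠ p ∧ c < bernoulliW1IRatio p s := by
  have hnhds : {s | s ∈ Icc (0 : ℝ) 1 ∧ c < bernoulliW1IRatio p s} ∈ 𝓝 (1 - p) := by
    refine inter_mem (Icc_mem_nhds (by linarith) (by linarith)) ?_
    refine ((continuous_bernoulliW1IRatio p).tendsto (1 - p)).eventually_const_lt ?_
    rwa [bernoulliW1IRatio_one_sub_self hp hp1]
  obtain ⟨s, ⟨hs, hcs⟩, hsp⟩ := (infinite_of_mem_nhds _ hnhds).nontrivial.exists_ne p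
  exact ⟨s, hs, hsp, hcs⟩

end Bernoulli

/-- **Sharp `W₁I` inequality for the Bernoulli measure.** For `p ∈ (0,1)` and `s ∈ [0,1]`
one has `(s − p)² ≤ p(1−p)·(√(s/p) − √((1−s)/(1−p)))²`; equality holds when `s = 1 − p`;
and the constant `p(1−p)` cannot be replaced by any smaller constant. -/
theorem bernoulli_W1I_sharp (p : ℝ) (hp : 0 < p) (hp1 : p < 1) :
    (∀ s ∈ Icc (0 : ℝ) 1,
      (s - p) ^ 2 ≤ p * (1 - p) * (Real.sqrt (s / p) - Real.sqrt ((1 - s) / (1 - p))) ^ 2) ∧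
    ((1 - p) - p) ^ 2 =
      p * (1 - p) * (Real.sqrt ((1 - p) / p) - Real.sqrt ((1 - (1 - p)) / (1 - p))) ^ 2 ∧
    (∀ c : ℝ, c < p * (1 - p) → ∃ s ∈ Icc (0 : ℝ) 1,
      c * (Real.sqrt (s / p) - Real.sqrt ((1 - s) / (1 - p))) ^ 2 < (s - p) ^ 2) := by
  refine ⟨fun s hs => ?_, ?_, fun c hc => ?_⟩
  · rw [sq_sub_eq_bernoulliW1IRatio_mul hp hp1 hs]
    exact mul_le_mul_of_nonneg_right (bernoulliW1IRatio_le hp hp1 hs) (sq_nonneg _)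
  · rw [sq_sub_eq_bernoulliW1IRatio_mul hp hp1 ⟨by linarith, by linarith⟩,
      bernoulliW1IRatio_one_sub_self hp hp1]
  · obtain ⟨s, hs, hsp, hcs⟩ := exists_ne_lt_bernoulliW1IRatio hp hp1 hc
    refine ⟨s, hs, ?_⟩
    rw [sq_sub_eq_bernoulliW1IRatio_mul hp hp1 hs]
    exact mul_lt_mul_of_pos_right hcs
      (sq_pos_of_ne_zero (sqrt_div_sub_sqrt_div_ne_zero hp hp1 hs hsp))
end

section
/- Let μ be a probability measure on ℝⁿ satisfying the Poincaré inequality Var_μ(g) ≤ c_P · ∫ |∇g|² dμ for every continuously differentiable g ∈ L²(μ), where c_P is a finite constant. Then for every measurable f : ℝⁿ → [0,∞) with ∫ f dμ = 1 such that √f is continuously differentiable, one has (∫ |f − 1| dμ)² ≤ 4 c_P · ∫ |∇√f|² dμ. Equivalently, writing ν = f·μ, ‖ν − μ‖_TV² ≤ 4 c_P · I(ν|μ). -/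
open MeasureTheory Real

/-! Write `g = √f`, so that `∫ g² dμ = 1` and `|f - 1| = |g - 1| |g + 1|`. By Cauchy–Schwarz,
`(∫ |f - 1| dμ)² ≤ ∫ (g - 1)² dμ · ∫ (g + 1)² dμ = (2 - 2∫ g dμ)(2 + 2∫ g dμ) = 4 Var_μ(g)`,
and the Poincaré inequality for `g` bounds `Var_μ(g)` by `c_P ∫ |∇√f|² dμ`. -/

section

variable {α : Type*} [MeasurableSpace α] {μ : Measure α}

lemma integral_mul_eq_inner_toLp {u v : α → ℝ} (hu : MemLp u 2 μ) (hv : MemLp v 2 μ) :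
    ∫ x, u x * v x ∂μ = inner ℝ (hu.toLp u) (hv.toLp v) := by
  rw [L2.inner_def]
  refine integral_congr_ae ?_
  filter_upwards [hu.coeFn_toLp, hv.coeFn_toLp] with x hux hvx
  simp [hux, hvx, mul_comm]

lemma sq_integral_mul_le_integral_sq_mul_integral_sq {u v : α → ℝ} (hu : MemLp u 2 μ)
    (hv : MemLp v 2 μ) :
    (∫ x, u x * v x ∂μ) ^ 2 ≤ (∫ x, u x ^ 2 ∂μ) * ∫ x, v x ^ 2 ∂μ := by
  simp only [sq, integral_mul_eq_inner_toLp hu hv, integral_mul_eq_inner_toLp hu hu,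
    integral_mul_eq_inner_toLp hv hv]
  exact real_inner_mul_inner_self_le _ _

variable [IsProbabilityMeasure μ]

lemma integral_sub_const_sq {g : α → ℝ} (hg : MemLp g 2 μ) (c : ℝ) :
    ∫ x, (g x - c) ^ 2 ∂μ = ∫ x, g x ^ 2 ∂μ - 2 * c * ∫ x, g x ∂μ + c ^ 2 := by
  have hg_sq : Integrable (fun x => g x ^ 2) μ := hg.integrable_sq
  have hg_lin : Integrable (fun x => 2 * c * g x) μ := (hg.integrable one_le_two).const_mul _
  have h_expand : ∀ x, (g x - c) ^ 2 = (g x ^ 2 - 2 * c * g x) + c ^ 2 := fun x => by ring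
  simp only [h_expand]
  rw [integral_add (f := fun x => g x ^ 2 - 2 * c * g x) (hg_sq.sub hg_lin) (integrable_const _),
    integral_sub hg_sq hg_lin, integral_const_mul]
  simp

lemma sq_integral_abs_sq_sub_one_le {g : α → ℝ} (hg : MemLp g 2 μ)
    (hg_norm : ∫ x, g x ^ 2 ∂μ = 1) :
    (∫ x, |g x ^ 2 - 1| ∂μ) ^ 2 ≤ 4 * (∫ x, g x ^ 2 ∂μ - (∫ x, g x ∂μ) ^ 2) := by
  have h_factor : ∀ x, |g x ^ 2 - 1| = |g x - 1| * |g x - (-1)| := fun x => by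
    rw [← abs_mul]; ring_nf
  have h_cs := sq_integral_mul_le_integral_sq_mul_integral_sq
    (u := fun x => |g x - 1|) (v := fun x => |g x - (-1)|) (hg.sub (memLp_const 1)).abs (hg.sub (memLp_const (-1))).abs
  simp only [sq_abs] at h_cs
  calc (∫ x, |g x ^ 2 - 1| ∂μ) ^ 2
      = (∫ x, |g x - 1| * |g x - (-1)| ∂μ) ^ 2 := by simp only [h_factor]
    _ ≤ (∫ x, (g x - 1) ^ 2 ∂μ) * ∫ x, (g x - (-1)) ^ 2 ∂μ := h_cs
    _ = 4 * (∫ x, g x ^ 2 ∂μ - (∫ x, g x ∂μ) ^ 2) := by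
      rw [integral_sub_const_sq hg, integral_sub_const_sq hg, hg_norm]; ring

end

theorem poincare_implies_tv_information_general {n : ℕ}
    (μ : Measure (EuclideanSpace ℝ (Fin n))) [IsProbabilityMeasure μ] (cP : ℝ)
    (hPoincare : ∀ g : EuclideanSpace ℝ (Fin n) → ℝ, ContDiff ℝ 1 g → MemLp g 2 μ →
      ∫ x, (g x) ^ 2 ∂μ - (∫ x, g x ∂μ) ^ 2 ≤ cP * ∫ x, ‖fderiv ℝ g x‖ ^ 2 ∂μ)
    (f : EuclideanSpace ℝ (Fin n) → ℝ)
    (hf_nonneg : ∀ x, 0 ≤ f x) (hf_int : ∫ x, f x ∂μ = 1)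
    (hf_sqrt : ContDiff ℝ 1 (fun x => Real.sqrt (f x))) :
    (∫ x, |f x - 1| ∂μ) ^ 2 ≤
      4 * cP * ∫ x, ‖fderiv ℝ (fun y => Real.sqrt (f y)) x‖ ^ 2 ∂μ := by
  have h_sq : ∀ x, √(f x) ^ 2 = f x := fun x => sq_sqrt (hf_nonneg x)
  have hf_integrable : Integrable f μ := .of_integral_ne_zero (by simp [hf_int])
  have h_mem : MemLp (fun x => √(f x)) 2 μ :=
    (memLp_two_iff_integrable_sq hf_sqrt.continuous.aestronglyMeasurable).2
      (by simpa only [h_sq] using hf_integrable)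
  have h_norm : ∫ x, √(f x) ^ 2 ∂μ = 1 := by simp only [h_sq, hf_int]
  calc (∫ x, |f x - 1| ∂μ) ^ 2
      = (∫ x, |√(f x) ^ 2 - 1| ∂μ) ^ 2 := by simp only [h_sq]
    _ ≤ 4 * (∫ x, √(f x) ^ 2 ∂μ - (∫ x, √(f x) ∂μ) ^ 2) :=
      sq_integral_abs_sq_sub_one_le h_mem h_norm
    _ ≤ 4 * (cP * ∫ x, ‖fderiv ℝ (fun y => √(f y)) x‖ ^ 2 ∂μ) := by
      gcongr; exact hPoincare _ hf_sqrt h_mem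
    _ = 4 * cP * ∫ x, ‖fderiv ℝ (fun y => √(f y)) x‖ ^ 2 ∂μ := by ring

/-- **Poincaré implies the CKP-type transportation-information inequality.** If a
probability measure `μ` on `ℝⁿ` satisfies the Poincaré inequality
`Var_μ(g) ≤ c_P ∫ |∇g|² dμ` for all continuously differentiable `g ∈ L²(μ)`, then for
every density `f ≥ 0` with `∫ f dμ = 1` and `√f` continuously differentiable one has
`‖fμ − μ‖_TV² = (∫ |f − 1| dμ)² ≤ 4 c_P ∫ |∇√f|² dμ = 4 c_P I(fμ|μ)`. -/
theorem poincare_implies_tv_information {n : ℕ}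
    (μ : Measure (EuclideanSpace ℝ (Fin n))) [IsProbabilityMeasure μ] (cP : ℝ)
    (hPoincare : ∀ g : EuclideanSpace ℝ (Fin n) → ℝ, ContDiff ℝ 1 g → MemLp g 2 μ →
      ∫ x, (g x) ^ 2 ∂μ - (∫ x, g x ∂μ) ^ 2 ≤ cP * ∫ x, ‖fderiv ℝ g x‖ ^ 2 ∂μ)
    (f : EuclideanSpace ℝ (Fin n) → ℝ) (hf_meas : Measurable f)
    (hf_nonneg : ∀ x, 0 ≤ f x) (hf_int : ∫ x, f x ∂μ = 1)
    (hf_sqrt : ContDiff ℝ 1 (fun x => Real.sqrt (f x))) :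
    (∫ x, |f x - 1| ∂μ) ^ 2 ≤
      4 * cP * ∫ x, ‖fderiv ℝ (fun y => Real.sqrt (f y)) x‖ ^ 2 ∂μ :=
  poincare_implies_tv_information_general μ cP hPoincare f hf_nonneg hf_int hf_sqrt
end

section
/- Let −∞ ≤ x₀ < y₀ ≤ +∞, let m : (x₀, y₀) → (0,∞) be Lebesgue-integrable with 0 < Z = ∫_{x₀}^{y₀} m(x) dx < ∞, and let μ be the probability measure on (x₀, y₀) with density m/Z with respect to Lebesgue measure. Let ρ : (x₀, y₀) → ℝ be differentiable with ρ'(x) > 0 for all x and ρ ∈ L¹(μ). Then for every locally absolutely continuous g : (x₀, y₀) → ℝ with |g'(x)| ≤ ρ'(x) for almost every x and ∫ g dμ = 0, and for every x ∈ (x₀, y₀): ∫_x^{y₀} g(z) m(z) dz ≤ ∫_x^{y₀} (ρ(z) − μ(ρ)) m(z) dz, where μ(ρ) = ∫ ρ dμ. Consequently, sup_x (1/ρ'(x)) ∫_x^{y₀} g(z) m(z) dz ≤ ‖g‖_{Lip(ρ)} · C(ρ), where ‖g‖_{Lip(ρ)} = sup_x |g'(x)|/ρ'(x) and C(ρ)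 = sup_x (1/ρ'(x)) ∫_x^{y₀} (ρ(z) − μ(ρ)) m(z) dz. -/
open MeasureTheory Real Set

/-!
Fix `ℓ` with `|g'| ≤ ℓ ρ'` a.e. Then `F = ℓ (ρ - μ(ρ)) - g` is nondecreasing and `F m` has
total integral zero. A nondecreasing function with vanishing weighted mean has nonnegative
weighted tail integrals: if `F(x) ≥ 0` the integrand of the tail is nonnegative, and otherwise
the complementary integral over `(x₀, x]` is nonpositive. This gives
`∫_x^{y₀} g m ≤ ℓ ∫_x^{y₀} (ρ - μ(ρ)) m`; taking `ℓ = 1` and `ℓ = ‖g‖_{Lip(ρ)}` yields both claims.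
-/

section WithDensity

variable {α : Type*} [MeasurableSpace α] {ν : Measure α}

theorem integral_withDensity_ofReal {f : α → ℝ} (hf : AEMeasurable f ν) (hf0 : 0 ≤ᵐ[ν] f)
    (F : α → ℝ) :
    ∫ x, F x ∂ν.withDensity (fun x => ENNReal.ofReal (f x)) = ∫ x, f x * F x ∂ν := by
  rw [integral_withDensity_eq_integral_toReal_smul₀ hf.ennreal_ofReal
    (ae_of_all _ fun _ => ENNReal.ofReal_lt_top)]
  refine integral_congr_ae ?_
  filter_upwards [hf0] with x hx
  rw [ENNReal.toReal_ofReal hx, smul_eq_mul]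

theorem integrable_withDensity_ofReal_iff {f : α → ℝ} (hf : AEMeasurable f ν) (hf0 : 0 ≤ᵐ[ν] f)
    {F : α → ℝ} :
    Integrable F (ν.withDensity fun x => ENNReal.ofReal (f x)) ↔
      Integrable (fun x => f x * F x) ν := by
  rw [integrable_withDensity_iff_integrable_smul₀' hf.ennreal_ofReal
    (ae_of_all _ fun _ => ENNReal.ofReal_lt_top)]
  refine integrable_congr ?_
  filter_upwards [hf0] with x hx
  rw [ENNReal.toReal_ofReal hx, smul_eq_mul]

variable {m F : α → ℝ} {Z : ℝ}

theorem integrable_mul_of_integrable_withDensity_div (hm : AEMeasurable m ν) (hm0 : 0 ≤ᵐ[ν] m)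
    (hZ : 0 < Z) (hF : Integrable F (ν.withDensity fun x => ENNReal.ofReal (m x / Z))) :
    Integrable (fun x => F x * m x) ν := by
  have hmZ0 : 0 ≤ᵐ[ν] fun x => m x / Z := hm0.mono fun x hx => div_nonneg hx hZ.le
  have := ((integrable_withDensity_ofReal_iff (hm.div_const Z) hmZ0).1 hF).const_mul Z
  refine this.congr (ae_of_all _ fun x => ?_)
  field_simp

theorem integral_sub_integral_withDensity_div_mul_eq_zero (hm : Integrable m ν)
    (hm0 : 0 ≤ᵐ[ν] m) (hZ : ∫ x, m x ∂ν = Z) (hZ0 : 0 < Z)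
    (hF : Integrable F (ν.withDensity fun x => ENNReal.ofReal (m x / Z))) :
    ∫ x, (F x - ∫ y, F y ∂ν.withDensity fun x => ENNReal.ofReal (m x / Z)) * m x ∂ν = 0 := by
  have hmZ0 : 0 ≤ᵐ[ν] fun x => m x / Z := hm0.mono fun x hx => div_nonneg hx hZ0.le
  have hFm := integrable_mul_of_integrable_withDensity_div hm.aemeasurable hm0 hZ0 hF
  have hmean : ∫ y, F y ∂ν.withDensity (fun x => ENNReal.ofReal (m x / Z)) =
      Z⁻¹ * ∫ x, F x * m x ∂ν := by
    rw [integral_withDensity_ofReal (hm.aemeasurable.div_const Z) hmZ0, ← integral_const_mul]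
    exact integral_congr_ae (ae_of_all _ fun x => by ring)
  simp_rw [sub_mul]
  rw [integral_sub hFm (hm.const_mul _), integral_const_mul, hZ, hmean]
  field_simp
  ring

end WithDensity

theorem setIntegral_inter_Ioi_nonneg_of_monotoneOn {ν : Measure ℝ} {S : Set ℝ}
    (hS : MeasurableSet S) {F m : ℝ → ℝ} (hF : MonotoneOn F S) (hm : ∀ x ∈ S, 0 ≤ m x)
    (hFm : IntegrableOn (fun x => F x * m x) S ν) (hFm0 : ∫ x in S, F x * m x ∂ν = 0)
    {x : ℝ} (hx : x ∈ S) :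
    0 ≤ ∫ z in S ∩ Ioi x, F z * m z ∂ν := by
  rcases le_or_gt 0 (F x) with hFx | hFx
  · refine setIntegral_nonneg (hS.inter measurableSet_Ioi) fun z hz => ?_
    exact mul_nonneg (hFx.trans (hF hx hz.1 (le_of_lt hz.2))) (hm z hz.1)
  · have hhead : ∫ z in S \ Ioi x, F z * m z ∂ν ≤ 0 := by
      refine setIntegral_nonpos (hS.diff measurableSet_Ioi) fun z hz => ?_
      have hFz : F z ≤ 0 := (hF hz.1 hx (not_lt.1 hz.2)).trans hFx.le
      exact mul_nonpos_of_nonpos_of_nonneg hFz (hm z hz.1)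
    linarith [integral_inter_add_sdiff (measurableSet_Ioi (a := x)) hFm]

section Comparison

variable {S : Set ℝ} {g g' : ℝ → ℝ}

theorem monotoneOn_sub_of_ae_le_deriv (hS : S.OrdConnected) {f f' : ℝ → ℝ}
    (hf : ∀ x ∈ S, HasDerivAt f (f' x) x)
    (hg_ii : ∀ x ∈ S, ∀ y ∈ S, IntervalIntegrable g' volume x y)
    (hg : ∀ x ∈ S, ∀ y ∈ S, g y - g x = ∫ t in x..y, g' t)
    (hle : ∀ᵐ x ∂volume.restrict S, g' x ≤ f' x) :
    MonotoneOn (fun x => f x - g x) S := by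
  intro x hx y hy hxy
  have hIcc : Icc x y ⊆ S := hS.out hx hy
  -- `min g' f'` agrees with `g'` a.e. and lies below `f'` everywhere, as the FTC bound requires
  have hφ : (fun t => min (g' t) (f' t)) =ᵐ[volume.restrict (Icc x y)] g' := by
    filter_upwards [ae_restrict_of_ae_restrict_of_subset hIcc hle] with t ht using min_eq_left ht
  have hφint : IntegrableOn (fun t => min (g' t) (f' t)) (Icc x y) :=
    ((intervalIntegrable_iff_integrableOn_Icc_of_le hxy).1 (hg_ii x hx y hy)).congr hφ.symm
  have hFTC := intervalIntegral.integral_le_sub_of_hasDeriv_right_of_le hxy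
    (fun t ht => (hf t (hIcc ht)).continuousAt.continuousWithinAt)
    (fun t ht => (hf t (hIcc (Ioo_subset_Icc_self ht))).hasDerivWithinAt) hφint
    (fun t _ => min_le_right _ _)
  have hφ_eq : ∫ t in x..y, min (g' t) (f' t) = ∫ t in x..y, g' t := by
    rw [intervalIntegral.integral_of_le hxy, intervalIntegral.integral_of_le hxy]
    exact integral_congr_ae (ae_restrict_of_ae_restrict_of_subset Ioc_subset_Icc_self hφ)
  linarith [hg x hx y hy]

theorem setIntegral_inter_Ioi_le_of_ae_deriv_le (hS : S.OrdConnected) {m h h' : ℝ → ℝ}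
    (hm : ∀ x ∈ S, 0 ≤ m x) (hh : ∀ x ∈ S, HasDerivAt h (h' x) x)
    (hg_ii : ∀ x ∈ S, ∀ y ∈ S, IntervalIntegrable g' volume x y)
    (hg : ∀ x ∈ S, ∀ y ∈ S, g y - g x = ∫ t in x..y, g' t)
    (hle : ∀ᵐ x ∂volume.restrict S, g' x ≤ h' x)
    (hhm : IntegrableOn (fun x => h x * m x) S) (hhm0 : ∫ x in S, h x * m x = 0)
    (hgm : IntegrableOn (fun x => g x * m x) S) (hgm0 : ∫ x in S, g x * m x = 0)
    {x : ℝ} (hx : x ∈ S) :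
    ∫ z in S ∩ Ioi x, g z * m z ≤ ∫ z in S ∩ Ioi x, h z * m z := by
  have hFm : IntegrableOn (fun z => (h z - g z) * m z) S := by
    simp_rw [sub_mul]; exact hhm.sub hgm
  have hFm0 : ∫ z in S, (h z - g z) * m z = 0 := by
    simp_rw [sub_mul]; rw [integral_sub hhm hgm, hhm0, hgm0, sub_zero]
  have htail := setIntegral_inter_Ioi_nonneg_of_monotoneOn hS.measurableSet
    (monotoneOn_sub_of_ae_le_deriv hS hh hg_ii hg hle) hm hFm hFm0 hx
  simp_rw [sub_mul] at htail
  rw [integral_sub (hhm.mono_set inter_subset_left) (hgm.mono_set inter_subset_left)] at htail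
  linarith

theorem setIntegral_inter_Ioi_le_mul_of_ae_deriv_le (hS : S.OrdConnected) {m k k' : ℝ → ℝ}
    {ℓ : ℝ} (hm : ∀ x ∈ S, 0 ≤ m x) (hk : ∀ x ∈ S, HasDerivAt k (k' x) x)
    (hg_ii : ∀ x ∈ S, ∀ y ∈ S, IntervalIntegrable g' volume x y)
    (hg : ∀ x ∈ S, ∀ y ∈ S, g y - g x = ∫ t in x..y, g' t)
    (hle : ∀ᵐ x ∂volume.restrict S, g' x ≤ ℓ * k' x)
    (hkm : IntegrableOn (fun x => k x * m x) S) (hkm0 : ∫ x in S, k x * m x = 0)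
    (hgm : IntegrableOn (fun x => g x * m x) S) (hgm0 : ∫ x in S, g x * m x = 0)
    {x : ℝ} (hx : x ∈ S) :
    ∫ z in S ∩ Ioi x, g z * m z ≤ ℓ * ∫ z in S ∩ Ioi x, k z * m z := by
  have := setIntegral_inter_Ioi_le_of_ae_deriv_le hS hm (h := fun z => ℓ * k z)
    (fun z hz => (hk z hz).const_mul ℓ) hg_ii hg hle
    (by simpa only [IntegrableOn, mul_assoc] using hkm.const_mul ℓ)
    (by simp only [mul_assoc, integral_const_mul, hkm0, mul_zero]) hgm hgm0 hx
  simpa only [mul_assoc, integral_const_mul] using this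

end Comparison

theorem ENNReal.biSup_ofReal_le_mul {ι : Type*} {S : Set ι} {u v w : ι → ℝ}
    (hvw : ∀ x ∈ S, v x ≤ w x)
    (h : ∀ ℓ, 0 ≤ ℓ → (∀ x ∈ S, u x ≤ ℓ) → ∀ x ∈ S, v x ≤ ℓ * w x) :
    ⨆ x ∈ S, ENNReal.ofReal (v x) ≤
      (⨆ x ∈ S, ENNReal.ofReal (u x)) * ⨆ x ∈ S, ENNReal.ofReal (w x) := by
  refine iSup₂_le fun x hx => ?_
  have hw : ENNReal.ofReal (w x) ≤ ⨆ x ∈ S, ENNReal.ofReal (w x) :=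
    le_iSup₂ (f := fun x (_ : x ∈ S) => ENNReal.ofReal (w x)) x hx
  set L := ⨆ x ∈ S, ENNReal.ofReal (u x)
  set C := ⨆ x ∈ S, ENNReal.ofReal (w x)
  by_cases hL : L = ⊤
  · by_cases hC : C = 0
    · rw [hC, mul_zero]
      exact (ENNReal.ofReal_le_ofReal (hvw x hx)).trans (hC ▸ hw)
    · rw [hL, ENNReal.top_mul hC]
      exact le_top
  · have hu : ∀ y ∈ S, u y ≤ L.toReal := fun y hy =>
      (ENNReal.ofReal_le_iff_le_toReal hL).1
        (le_iSup₂ (f := fun y (_ : y ∈ S) => ENNReal.ofReal (u y)) y hy)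
    calc ENNReal.ofReal (v x) ≤ ENNReal.ofReal (L.toReal * w x) :=
          ENNReal.ofReal_le_ofReal (h _ ENNReal.toReal_nonneg hu x hx)
      _ = ENNReal.ofReal L.toReal * ENNReal.ofReal (w x) := ENNReal.ofReal_mul ENNReal.toReal_nonneg
      _ ≤ L * C := by
          rw [ENNReal.ofReal_toReal hL]
          exact mul_le_mul_right hw L

theorem one_dim_poisson_tail_estimate_general (x₀ y₀ : EReal)
    (S : Set ℝ) (hS : S = {x : ℝ | x₀ < (x : EReal) ∧ (x : EReal) < y₀})
    (m : ℝ → ℝ) (hm_pos : ∀ x ∈ S, 0 < m x)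
    (hm_int : IntegrableOn m S volume)
    (Z : ℝ) (hZ_def : Z = ∫ x in S, m x ∂volume) (hZ_pos : 0 < Z)
    (μ : Measure ℝ)
    (hμ : μ = (volume.restrict S).withDensity (fun x => ENNReal.ofReal (m x / Z)))
    (ρ ρ' : ℝ → ℝ)
    (hρ_deriv : ∀ x ∈ S, HasDerivAt ρ (ρ' x) x)
    (hρ'_pos : ∀ x ∈ S, 0 < ρ' x)
    (hρ_int : Integrable ρ μ)
    (g g' : ℝ → ℝ)
    (hg_ii : ∀ x ∈ S, ∀ y ∈ S, IntervalIntegrable g' volume x y)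
    (hg_ftc : ∀ x ∈ S, ∀ y ∈ S, g y - g x = ∫ t in x..y, g' t ∂volume)
    (hg'_le : ∀ᵐ x ∂(volume.restrict S), |g' x| ≤ ρ' x)
    (hg_int : Integrable g μ)
    (hg_mean : ∫ x, g x ∂μ = 0) :
    (∀ x ∈ S, ∫ z in S ∩ Ioi x, g z * m z ∂volume ≤
      ∫ z in S ∩ Ioi x, (ρ z - ∫ w, ρ w ∂μ) * m z ∂volume) ∧
    (⨆ x ∈ S, ENNReal.ofReal ((1 / ρ' x) * ∫ z in S ∩ Ioi x, g z * m z ∂volume)) ≤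
      (⨆ x ∈ S, ENNReal.ofReal (|g' x| / ρ' x)) *
      (⨆ x ∈ S, ENNReal.ofReal
        ((1 / ρ' x) * ∫ z in S ∩ Ioi x, (ρ z - ∫ w, ρ w ∂μ) * m z ∂volume)) := by
  subst hμ
  have hSord : S.OrdConnected := hS ▸ ordConnected_Ioo.preimage_mono EReal.coe_strictMono.monotone
  have hm0 : ∀ᵐ x ∂volume.restrict S, 0 ≤ m x :=
    ae_restrict_of_forall_mem hSord.measurableSet fun x hx => (hm_pos x hx).le
  set c := ∫ w, ρ w ∂(volume.restrict S).withDensity fun x => ENNReal.ofReal (m x / Z)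
  have hρc : IntegrableOn (fun z => (ρ z - c) * m z) S := by
    simp_rw [sub_mul]
    exact (integrable_mul_of_integrable_withDensity_div hm_int.aemeasurable hm0 hZ_pos
      hρ_int).sub (hm_int.const_mul c)
  have hρc0 : ∫ z in S, (ρ z - c) * m z = 0 :=
    integral_sub_integral_withDensity_div_mul_eq_zero hm_int hm0 hZ_def.symm hZ_pos hρ_int
  have hgm := integrable_mul_of_integrable_withDensity_div hm_int.aemeasurable hm0 hZ_pos hg_int
  have hgm0 : ∫ z in S, g z * m z = 0 := by
    simpa [hg_mean] using
      integral_sub_integral_withDensity_div_mul_eq_zero hm_int hm0 hZ_def.symm hZ_pos hg_int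
  have key : ∀ ℓ, (∀ᵐ z ∂volume.restrict S, g' z ≤ ℓ * ρ' z) → ∀ x ∈ S,
      ∫ z in S ∩ Ioi x, g z * m z ≤ ℓ * ∫ z in S ∩ Ioi x, (ρ z - c) * m z :=
    fun ℓ hle x hx => setIntegral_inter_Ioi_le_mul_of_ae_deriv_le hSord
      (fun z hz => (hm_pos z hz).le) (fun z hz => (hρ_deriv z hz).sub_const c) hg_ii hg_ftc hle
      hρc hρc0 hgm hgm0 hx
  have first : ∀ x ∈ S, ∫ z in S ∩ Ioi x, g z * m z ≤ ∫ z in S ∩ Ioi x, (ρ z - c) * m z :=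
    fun x hx => by simpa using key 1 (hg'_le.mono fun z hz => by linarith [le_abs_self (g' z)]) x hx
  refine ⟨first, ENNReal.biSup_ofReal_le_mul (fun x hx => ?_) fun ℓ _ hℓ x hx => ?_⟩
  · exact mul_le_mul_of_nonneg_left (first x hx) (one_div_nonneg.2 (hρ'_pos x hx).le)
  · have hle : ∀ᵐ z ∂volume.restrict S, g' z ≤ ℓ * ρ' z :=
      ae_restrict_of_forall_mem hSord.measurableSet fun z hz =>
        (le_abs_self _).trans ((div_le_iff₀ (hρ'_pos z hz)).1 (hℓ z hz))
    calc (1 / ρ' x) * ∫ z in S ∩ Ioi x, g z * m z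
        ≤ (1 / ρ' x) * (ℓ * ∫ z in S ∩ Ioi x, (ρ z - c) * m z) :=
          mul_le_mul_of_nonneg_left (key ℓ hle x hx) (one_div_nonneg.2 (hρ'_pos x hx).le)
      _ = ℓ * ((1 / ρ' x) * ∫ z in S ∩ Ioi x, (ρ z - c) * m z) := by ring

/-- **Tail estimate for the one-dimensional Poisson equation.** Let `(x₀, y₀)` be an
interval with `−∞ ≤ x₀ < y₀ ≤ +∞`, `m > 0` an integrable speed density on it with total
mass `Z ∈ (0, ∞)`, and `μ` the probability measure with density `m/Z`. Let `ρ` be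
differentiable with `ρ' > 0` and `ρ ∈ L¹(μ)`. Then for every locally absolutely
continuous `g` with `|g'| ≤ ρ'` a.e. and `∫ g dμ = 0`, and every `x ∈ (x₀, y₀)`,
`∫_x^{y₀} g m ≤ ∫_x^{y₀} (ρ − μ(ρ)) m`; consequently
`sup_x (1/ρ'(x)) ∫_x^{y₀} g m ≤ ‖g‖_{Lip(ρ)}·C(ρ)` where
`‖g‖_{Lip(ρ)} = sup_x |g'(x)|/ρ'(x)` and
`C(ρ) = sup_x (1/ρ'(x)) ∫_x^{y₀} (ρ − μ(ρ)) m`. -/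
theorem one_dim_poisson_tail_estimate (x₀ y₀ : EReal) (hxy : x₀ < y₀)
    (S : Set ℝ) (hS : S = {x : ℝ | x₀ < (x : EReal) ∧ (x : EReal) < y₀})
    (m : ℝ → ℝ) (hm_pos : ∀ x ∈ S, 0 < m x)
    (hm_int : IntegrableOn m S volume)
    (Z : ℝ) (hZ_def : Z = ∫ x in S, m x ∂volume) (hZ_pos : 0 < Z)
    (μ : Measure ℝ)
    (hμ : μ = (volume.restrict S).withDensity (fun x => ENNReal.ofReal (m x / Z)))
    (ρ ρ' : ℝ → ℝ)
    (hρ_deriv : ∀ x ∈ S, HasDerivAt ρ (ρ' x) x)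
    (hρ'_pos : ∀ x ∈ S, 0 < ρ' x)
    (hρ_int : Integrable ρ μ)
    (g g' : ℝ → ℝ)
    (hg'_meas : Measurable g')
    (hg_ii : ∀ x ∈ S, ∀ y ∈ S, IntervalIntegrable g' volume x y)
    (hg_ftc : ∀ x ∈ S, ∀ y ∈ S, g y - g x = ∫ t in x..y, g' t ∂volume)
    (hg'_le : ∀ᵐ x ∂(volume.restrict S), |g' x| ≤ ρ' x)
    (hg_int : Integrable g μ)
    (hg_mean : ∫ x, g x ∂μ = 0) :
    (∀ x ∈ S, ∫ z in S ∩ Ioi x, g z * m z ∂volume ≤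
      ∫ z in S ∩ Ioi x, (ρ z - ∫ w, ρ w ∂μ) * m z ∂volume) ∧
    (⨆ x ∈ S, ENNReal.ofReal ((1 / ρ' x) * ∫ z in S ∩ Ioi x, g z * m z ∂volume)) ≤
      (⨆ x ∈ S, ENNReal.ofReal (|g' x| / ρ' x)) *
      (⨆ x ∈ S, ENNReal.ofReal
        ((1 / ρ' x) * ∫ z in S ∩ Ioi x, (ρ z - ∫ w, ρ w ∂μ) * m z ∂volume)) :=
  one_dim_poisson_tail_estimate_general x₀ y₀ S hS m hm_pos hm_int Z hZ_def hZ_pos μ hμ ρ ρ'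
    hρ_deriv hρ'_pos hρ_int g g' hg_ii hg_ftc hg'_le hg_int hg_mean
end
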